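/- Let n ≥ 1, let U be a 2^n × 2^n unitary matrix, let 0 ≤ α ≤ 1, and let ρ_DQC1 = 2^{−(n+1)} · [[I_{2^n}, α U†],[α U, I_{2^n}]]. Then for every 2^{n+1} × 2^{n+1} unitary matrix V, (1/√2)·‖ρ_DQC1 − V ρ_DQC1 V†‖_F ≤ α/2^{n/2}. In particular the maximal LNU distance of the DQC1 state, across any bipartition, is at most α/2^{n/2}, which vanishes exponentially in n. -/

import Mathlib

open Matrix

/-- The DQC1 state on n+1 qubits determined by a 2ⁿ×2ⁿ unitary U and
polarization α: ρ = 2^{-(n+1)} · fromBlocks(I, αUᴴ, αU, I). -/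
noncomputable def dqc1State (n : ℕ) (α : ℝ) (U : Matrix (Fin (2 ^ n)) (Fin (2 ^ n)) ℂ) :
    Matrix (Fin (2 ^ n) ⊕ Fin (2 ^ n)) (Fin (2 ^ n) ⊕ Fin (2 ^ n)) ℂ :=
  ((2 : ℂ) ^ (n + 1))⁻¹ • Matrix.fromBlocks 1 ((α : ℂ) • Uᴴ) ((α : ℂ) • U) 1

/-- The Frobenius norm of a complex matrix: `‖A‖_F = √(Tr(AᴴA))`. -/
noncomputable def frobNorm {n : Type*} [Fintype n] (A : Matrix n n ℂ) : ℝ :=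
  Real.sqrt ((Aᴴ * A).trace.re)

/-! The state is `2^{-(n+1)} (1 + α X)` with `X = [[0, Uᴴ], [U, 0]]` unitary. Conjugation by `V`
fixes the identity part, so `ρ - VρVᴴ = 2^{-(n+1)} α (X - VXVᴴ)`, and by the triangle inequality
and unitary invariance its Frobenius norm is at most `2^{-(n+1)} α · 2‖X‖_F`, where
`‖X‖_F = √(2^{n+1})` because `XᴴX = 1`. -/

section Frobenius

attribute [local instance] Matrix.frobeniusNormedAddCommGroup Matrix.frobeniusNormedSpace

variable {ι : Type*} [Fintype ι]

theorem re_trace_conjTranspose_mul_self {m : Type*} [Fintype m] (A : Matrix m ι ℂ) :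
    (Aᴴ * A).trace.re = ∑ i, ∑ j, ‖A i j‖ ^ 2 := by
  simp only [trace, diag, mul_apply, conjTranspose_apply, Complex.re_sum]
  rw [Finset.sum_comm]
  refine Finset.sum_congr rfl fun i _ => Finset.sum_congr rfl fun j _ => ?_
  rw [Complex.star_def, mul_comm, Complex.mul_conj', ← Complex.ofReal_pow, Complex.ofReal_re]

theorem frobNorm_eq_norm (A : Matrix ι ι ℂ) : frobNorm A = ‖A‖ := by
  simp only [frobNorm, frobenius_norm_def, re_trace_conjTranspose_mul_self, Real.sqrt_eq_rpow,
    Real.rpow_two]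

theorem frobNorm_smul (c : ℂ) (A : Matrix ι ι ℂ) : frobNorm (c • A) = ‖c‖ * frobNorm A := by
  simp only [frobNorm_eq_norm, norm_smul]

theorem frobNorm_sub_le (A B : Matrix ι ι ℂ) : frobNorm (A - B) ≤ frobNorm A + frobNorm B := by
  simpa only [frobNorm_eq_norm] using norm_sub_le A B

variable [DecidableEq ι]

theorem frobNorm_of_mem_unitaryGroup {X : Matrix ι ι ℂ} (hX : X ∈ unitaryGroup ι ℂ) :
    frobNorm X = √(Fintype.card ι) := by
  rw [frobNorm, ← star_eq_conjTranspose, (mem_unitaryGroup_iff' ..).mp hX, trace_one,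
    Complex.natCast_re]

theorem frobNorm_unitary_conj (A : Matrix ι ι ℂ) {V : Matrix ι ι ℂ}
    (hV : V ∈ unitaryGroup ι ℂ) : frobNorm (V * A * Vᴴ) = frobNorm A := by
  have hVV : Vᴴ * V = 1 := (mem_unitaryGroup_iff' ..).mp hV
  have hconj : (V * A * Vᴴ)ᴴ * (V * A * Vᴴ) = V * (Aᴴ * A) * Vᴴ := by
    simp only [conjTranspose_mul, conjTranspose_conjTranspose, Matrix.mul_assoc]
    rw [← Matrix.mul_assoc Vᴴ V, hVV, Matrix.one_mul]
  rw [frobNorm, frobNorm, hconj, trace_mul_comm, ← Matrix.mul_assoc, hVV, Matrix.one_mul]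

theorem frobNorm_sub_unitary_conj_le (A : Matrix ι ι ℂ) {V : Matrix ι ι ℂ}
    (hV : V ∈ unitaryGroup ι ℂ) : frobNorm (A - V * A * Vᴴ) ≤ 2 * frobNorm A := by
  calc frobNorm (A - V * A * Vᴴ) ≤ frobNorm A + frobNorm (V * A * Vᴴ) := frobNorm_sub_le _ _
    _ = 2 * frobNorm A := by rw [frobNorm_unitary_conj A hV, two_mul]

end Frobenius

section Unitary

variable {ι R : Type*} [Fintype ι] [DecidableEq ι] [CommRing R] [StarRing R]

theorem smul_one_add_sub_unitary_conj (c : R) (B : Matrix ι ι R) {V : Matrix ι ι R}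
    (hV : V ∈ unitaryGroup ι R) :
    c • (1 + B) - V * (c • (1 + B)) * Vᴴ = c • (B - V * B * Vᴴ) := by
  have hVV : V * Vᴴ = 1 := (mem_unitaryGroup_iff ..).mp hV
  rw [Matrix.mul_smul, Matrix.smul_mul, Matrix.mul_add, Matrix.add_mul, Matrix.mul_one, hVV,
    ← smul_sub, add_sub_add_left_eq_sub]

def offDiagBlocks (U : Matrix ι ι R) : Matrix (ι ⊕ ι) (ι ⊕ ι) R :=
  fromBlocks 0 Uᴴ U 0

theorem offDiagBlocks_mem_unitaryGroup {U : Matrix ι ι R} (hU : U ∈ unitaryGroup ι R) :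
    offDiagBlocks U ∈ unitaryGroup (ι ⊕ ι) R := by
  have hUU : Uᴴ * U = 1 := (mem_unitaryGroup_iff' ..).mp hU
  have hUU' : U * Uᴴ = 1 := (mem_unitaryGroup_iff ..).mp hU
  rw [mem_unitaryGroup_iff', star_eq_conjTranspose, offDiagBlocks, fromBlocks_conjTranspose,
    fromBlocks_multiply]
  simp [hUU, hUU', fromBlocks_one]

end Unitary

theorem dqc1State_eq_smul_one_add (n : ℕ) (α : ℝ) (U : Matrix (Fin (2 ^ n)) (Fin (2 ^ n)) ℂ) :
    dqc1State n α U = ((2 : ℂ) ^ (n + 1))⁻¹ • (1 + (α : ℂ) • offDiagBlocks U) := by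
  rw [dqc1State, offDiagBlocks]
  congr 1
  rw [fromBlocks_smul, ← fromBlocks_one, fromBlocks_add]
  simp

theorem dqc1_lnu_distance_bound_general (n : ℕ) (α : ℝ) (hα0 : 0 ≤ α)
    (U : Matrix (Fin (2 ^ n)) (Fin (2 ^ n)) ℂ)
    (hU : U ∈ Matrix.unitaryGroup (Fin (2 ^ n)) ℂ)
    (V : Matrix (Fin (2 ^ n) ⊕ Fin (2 ^ n)) (Fin (2 ^ n) ⊕ Fin (2 ^ n)) ℂ)
    (hV : V ∈ Matrix.unitaryGroup (Fin (2 ^ n) ⊕ Fin (2 ^ n)) ℂ) :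
    (1 / Real.sqrt 2) * frobNorm (dqc1State n α U - V * dqc1State n α U * Vᴴ)
      ≤ α / Real.sqrt (2 ^ n) := by
  set X := offDiagBlocks U
  have hX : frobNorm X = √2 * √(2 ^ n) := by
    rw [frobNorm_of_mem_unitaryGroup (offDiagBlocks_mem_unitaryGroup hU), Fintype.card_sum,
      Fintype.card_fin, ← Real.sqrt_mul zero_le_two]
    push_cast
    ring_nf
  have hc : ‖((2 : ℂ) ^ (n + 1))⁻¹ * (α : ℂ)‖ = α / 2 ^ (n + 1) := by
    rw [norm_mul, norm_inv, norm_pow, Complex.norm_ofNat, Complex.norm_real,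
      Real.norm_of_nonneg hα0, inv_mul_eq_div]
  calc 1 / √2 * frobNorm (dqc1State n α U - V * dqc1State n α U * Vᴴ)
      = 1 / √2 * (α / 2 ^ (n + 1) * frobNorm (X - V * X * Vᴴ)) := by
        rw [dqc1State_eq_smul_one_add, smul_one_add_sub_unitary_conj _ _ hV, Matrix.mul_smul,
          Matrix.smul_mul, ← smul_sub, smul_smul, frobNorm_smul, hc]
    _ ≤ 1 / √2 * (α / 2 ^ (n + 1) * (2 * frobNorm X)) := by
        gcongr
        exact frobNorm_sub_unitary_conj_le X hV
    _ = α / √(2 ^ n) := by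
        rw [hX, pow_succ]
        field_simp
        rw [Real.sq_sqrt (by positivity)]

/-- For every unitary V on the full 2^{n+1}-dimensional space, the LNU distance of
the DQC1 state under V is at most α/2^{n/2}; in particular the maximal LNU distance
of the DQC1 state across any bipartition vanishes exponentially in n. -/
theorem dqc1_lnu_distance_bound (n : ℕ) (hn : 1 ≤ n) (α : ℝ) (hα0 : 0 ≤ α) (hα1 : α ≤ 1)
    (U : Matrix (Fin (2 ^ n)) (Fin (2 ^ n)) ℂ)
    (hU : U ∈ Matrix.unitaryGroup (Fin (2 ^ n)) ℂ)
    (V : Matrix (Fin (2 ^ n) ⊕ Fin (2 ^ n)) (Fin (2 ^ n) ⊕ Fin (2 ^ n)) ℂ)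
    (hV : V ∈ Matrix.unitaryGroup (Fin (2 ^ n) ⊕ Fin (2 ^ n)) ℂ) :
    (1 / Real.sqrt 2) * frobNorm (dqc1State n α U - V * dqc1State n α U * Vᴴ)
      ≤ α / Real.sqrt (2 ^ n) :=
  dqc1_lnu_distance_bound_general n α hα0 U hU V hV
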